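/- There exists a constant C > 0 such that for all ε > 0, all d ≠ 0 and all x₁ ∈ ℝ, the quantity |∫_{-1/2}^{1/2} e^{iαx₁}/(iε - dα) dα| is bounded by C·(1/|d|)·(1 + log(|x₁| + 1)) + (2/|d|)·(1 + log(|x₁|+1)); in particular |ψ_{ε}(x₁)| := |∫_{-1/2}^{1/2} e^{iαx₁}/(iε - dα) dα| ≤ C_d (1 + log(|x₁|+1)) with C_d independent of ε. -/

import Mathlib

open Real MeasureTheory Complex

/-!
Fold the integral onto `[0, 1/2]` by pairing `α` with `-α`, and split `e^{iαx} = 1 + (e^{iαx} - 1)`.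
The constant part of a pair is `(iε - dα)⁻¹ + (iε + dα)⁻¹ = -2iε / (ε² + d²α²)`, whose integral is
an arctangent, at most `π / |d|` whatever `ε` is. For the rest, `‖e^{iθ} - 1‖ ≤ min |θ| 2` and
`‖iε - dα‖ ≥ |d| α` give the `ε`-free bound `4|x| / (|d| (1 + α|x|))`, whose integral is
`log (1 + |x|/2)` up to the factor `4 / |d|`.
-/

lemma norm_exp_I_mul_ofReal_sub_one_le_of_abs_le {θ s : ℝ} (h : |θ| ≤ s) :
    ‖Complex.exp (I * θ) - 1‖ ≤ 4 * s / (1 + s) := by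
  have h₁ : ‖Complex.exp (I * θ) - 1‖ ≤ |θ| := Real.norm_exp_I_mul_ofReal_sub_one_le
  have h₂ : ‖Complex.exp (I * θ) - 1‖ ≤ 2 := by
    rw [norm_exp_I_mul_ofReal_sub_one]
    simpa using abs_sin_le_one (θ / 2)
  have hs : 0 ≤ s := (abs_nonneg θ).trans h
  rw [le_div_iff₀ (by positivity)]
  nlinarith [norm_nonneg (Complex.exp (I * θ) - 1)]

lemma I_mul_ofReal_sub_ne_zero {ε : ℝ} (hε : ε ≠ 0) (d α : ℝ) : (I * ε - d * α : ℂ) ≠ 0 :=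
  fun h => hε (by simpa using congrArg im h)

lemma norm_exp_I_mul_sub_one_div_le {d : ℝ} (hd : d ≠ 0) (ε x β : ℝ) :
    ‖(Complex.exp (I * β * x) - 1) / (I * ε - d * β)‖ ≤ 4 / |d| * (|x| / (1 + |β| * |x|)) := by
  rcases eq_or_ne β 0 with rfl | hβ
  · simp only [ofReal_zero, mul_zero, zero_mul, Complex.exp_zero, sub_self, zero_div, norm_zero]
    positivity
  have hnum : ‖Complex.exp (I * β * x) - 1‖ ≤ |β| * (4 * |x| / (1 + |β| * |x|)) := by
    rw [mul_assoc, ← ofReal_mul, mul_div_assoc', mul_left_comm]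
    exact norm_exp_I_mul_ofReal_sub_one_le_of_abs_le (abs_mul β x).le
  have hden : |d| * |β| ≤ ‖(I * ε - d * β : ℂ)‖ := by
    calc |d| * |β| = |(I * ε - d * β : ℂ).re| := by simp [abs_mul]
      _ ≤ _ := abs_re_le_norm _
  rw [norm_div]
  calc _ ≤ |β| * (4 * |x| / (1 + |β| * |x|)) / (|d| * |β|) :=
        div_le_div₀ (by positivity) hnum (by positivity) hden
    _ = _ := by field_simp

lemma integral_div_sq_add_mul_sq {ε d : ℝ} (hε : ε ≠ 0) (hd : d ≠ 0) (b : ℝ) :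
    ∫ α in 0..b, ε / (ε ^ 2 + d ^ 2 * α ^ 2) = Real.arctan (d * b / ε) / d := by
  have hq : ∀ α : ℝ, 0 < ε ^ 2 + d ^ 2 * α ^ 2 := fun α => by positivity
  have hderiv : ∀ α ∈ Set.uIcc 0 b,
      HasDerivAt (fun α => Real.arctan (d * α / ε) / d) (ε / (ε ^ 2 + d ^ 2 * α ^ 2)) α := by
    intro α _
    have := (((hasDerivAt_id' α).const_mul d).div_const ε).arctan.div_const d
    refine this.congr_deriv ?_
    field_simp
  have hcont : Continuous fun α : ℝ => ε / (ε ^ 2 + d ^ 2 * α ^ 2) :=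
    continuous_const.div (by fun_prop) fun α => (hq α).ne'
  rw [intervalIntegral.integral_eq_sub_of_hasDerivAt hderiv (hcont.intervalIntegrable _ _)]
  simp

lemma integral_div_one_add_mul {M b : ℝ} (hM : 0 ≤ M) (hb : 0 ≤ b) :
    ∫ α in 0..b, M / (1 + α * M) = Real.log (1 + b * M) := by
  have hpos : ∀ α ∈ Set.uIcc 0 b, 0 < 1 + α * M := by
    intro α hα
    rw [Set.uIcc_of_le hb] at hα
    nlinarith [hα.1]
  have hderiv : ∀ α ∈ Set.uIcc 0 b,
      HasDerivAt (fun α => Real.log (1 + α * M)) (M / (1 + α * M)) α := by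
    intro α hα
    have := (((hasDerivAt_id α).mul_const M).const_add 1).log (hpos α hα).ne'
    simpa using this
  have hcont : ContinuousOn (fun α : ℝ => M / (1 + α * M)) (Set.uIcc 0 b) :=
    continuousOn_const.div (by fun_prop) fun α hα => (hpos α hα).ne'
  rw [intervalIntegral.integral_eq_sub_of_hasDerivAt hderiv hcont.intervalIntegrable]
  simp

lemma norm_inv_add_inv_neg {ε : ℝ} (hε : 0 < ε) (d α : ℝ) :
    ‖(I * ε - d * α : ℂ)⁻¹ + (I * ε + d * α)⁻¹‖ = 2 * (ε / (ε ^ 2 + d ^ 2 * α ^ 2)) := by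
  have hq : 0 < ε ^ 2 + d ^ 2 * α ^ 2 := by positivity
  have h₁ := I_mul_ofReal_sub_ne_zero hε.ne' d α
  have h₂ : (I * ε + d * α : ℂ) ≠ 0 := by simpa using I_mul_ofReal_sub_ne_zero hε.ne' d (-α)
  have key : (I * ε - d * α : ℂ)⁻¹ + (I * ε + d * α)⁻¹
      = ((-(2 * (ε / (ε ^ 2 + d ^ 2 * α ^ 2)))) : ℝ) * I := by
    have hq' : (ε ^ 2 + d ^ 2 * α ^ 2 : ℂ) ≠ 0 := by exact_mod_cast hq.ne'
    rw [inv_add_inv h₁ h₂, div_eq_iff (mul_ne_zero h₁ h₂)]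
    push_cast
    field_simp
    linear_combination 2 * (ε : ℂ) ^ 3 * I * I_sq
  rw [key, norm_mul, norm_I, mul_one, norm_real, norm_neg, Real.norm_of_nonneg (by positivity)]

theorem intervalIntegral.integral_neg_self_eq_integral_add_comp_neg {E : Type*}
    [NormedAddCommGroup E] [NormedSpace ℝ E] {f : ℝ → E} (hf : Continuous f) (a : ℝ) :
    ∫ x in -a..a, f x = ∫ x in 0..a, (f x + f (-x)) := by
  have hneg : IntervalIntegrable (fun x => f (-x)) volume 0 a :=
    (hf.comp continuous_neg).intervalIntegrable _ _
  rw [intervalIntegral.integral_add (hf.intervalIntegrable _ _) hneg,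
    intervalIntegral.integral_comp_neg, neg_zero, add_comm,
    intervalIntegral.integral_add_adjacent_intervals (hf.intervalIntegrable _ _)
      (hf.intervalIntegrable _ _)]

noncomputable def psiIntegrand (ε d x α : ℝ) : ℂ :=
  Complex.exp (I * α * x) / (I * ε - d * α)

section psiIntegrand

variable {ε d : ℝ}

lemma continuous_psiIntegrand (hε : ε ≠ 0) (d x : ℝ) : Continuous (psiIntegrand ε d x) :=
  Continuous.div (by fun_prop) (by fun_prop) (I_mul_ofReal_sub_ne_zero hε d)

lemma norm_psiIntegrand_add_psiIntegrand_neg_le (hε : 0 < ε) (hd : d ≠ 0) (x : ℝ) {α : ℝ}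
    (hα : 0 ≤ α) :
    ‖psiIntegrand ε d x α + psiIntegrand ε d x (-α)‖ ≤
      2 * (ε / (ε ^ 2 + d ^ 2 * α ^ 2)) + 8 / |d| * (|x| / (1 + α * |x|)) := by
  have hsplit : psiIntegrand ε d x α + psiIntegrand ε d x (-α) =
      ((I * ε - d * α : ℂ)⁻¹ + (I * ε + d * α)⁻¹) +
        ((Complex.exp (I * α * x) - 1) / (I * ε - d * α) +
          (Complex.exp (I * (-α : ℝ) * x) - 1) / (I * ε - d * (-α : ℝ))) := by
    simp only [psiIntegrand, ofReal_neg]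
    ring
  have h₁ := norm_exp_I_mul_sub_one_div_le hd ε x α
  have h₂ := norm_exp_I_mul_sub_one_div_le hd ε x (-α)
  rw [abs_neg] at h₂
  rw [abs_of_nonneg hα] at h₁ h₂
  rw [hsplit, ← norm_inv_add_inv_neg hε d α]
  refine (norm_add_le _ _).trans ?_
  gcongr
  exact (norm_add_le _ _).trans ((add_le_add h₁ h₂).trans_eq (by ring))

lemma norm_integral_psiIntegrand_le (hε : 0 < ε) (hd : d ≠ 0) (x : ℝ) :
    ‖∫ α in (-(1 / 2) : ℝ)..(1 / 2), psiIntegrand ε d x α‖ ≤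
      π / |d| + 8 / |d| * Real.log (1 + 1 / 2 * |x|) := by
  set b₁ : ℝ → ℝ := fun α => 2 * (ε / (ε ^ 2 + d ^ 2 * α ^ 2))
  set b₂ : ℝ → ℝ := fun α => 8 / |d| * (|x| / (1 + α * |x|))
  have hb₁ : IntervalIntegrable b₁ volume 0 (1 / 2) :=
    ((continuous_const.div (by fun_prop) fun α => by positivity).const_mul 2).intervalIntegrable _ _
  have hb₂ : IntervalIntegrable b₂ volume 0 (1 / 2) := by
    refine (continuousOn_const.mul
      (continuousOn_const.div (by fun_prop) fun α hα => ?_)).intervalIntegrable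
    rw [Set.uIcc_of_le (by norm_num)] at hα
    have := hα.1
    positivity
  have harctan : 2 * (Real.arctan (d * (1 / 2) / ε) / d) ≤ π / |d| := by
    set t := d * (1 / 2) / ε
    have ht : |Real.arctan t| ≤ π / 2 :=
      abs_le.mpr ⟨(neg_pi_div_two_lt_arctan t).le, (arctan_lt_pi_div_two t).le⟩
    calc 2 * (Real.arctan t / d) ≤ |2 * (Real.arctan t / d)| := le_abs_self _
      _ = 2 * |Real.arctan t| / |d| := by rw [abs_mul, abs_div, abs_two]; ring
      _ ≤ 2 * (π / 2) / |d| := by gcongr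
      _ = π / |d| := by ring
  rw [intervalIntegral.integral_neg_self_eq_integral_add_comp_neg
    (continuous_psiIntegrand hε.ne' d x)]
  calc _ ≤ ∫ α in (0 : ℝ)..(1 / 2), (b₁ α + b₂ α) :=
        intervalIntegral.norm_integral_le_of_norm_le (by norm_num)
          (ae_of_all _ fun α hα => norm_psiIntegrand_add_psiIntegrand_neg_le hε hd x hα.1.le)
          (hb₁.add hb₂)
    _ = 2 * (Real.arctan (d * (1 / 2) / ε) / d) + 8 / |d| * Real.log (1 + 1 / 2 * |x|) := by
        rw [intervalIntegral.integral_add hb₁ hb₂, intervalIntegral.integral_const_mul,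
          intervalIntegral.integral_const_mul, integral_div_sq_add_mul_sq hε.ne' hd,
          integral_div_one_add_mul (abs_nonneg x) (by norm_num)]
    _ ≤ _ := by linarith

end psiIntegrand

/-- Uniform (in `ε`) logarithmic bound for `ψ_ε(x₁) = ∫_{-1/2}^{1/2} e^{iαx₁}/(iε - dα) dα`. -/
theorem stmt_1 :
    ∃ C > (0 : ℝ), ∀ ε : ℝ, 0 < ε → ∀ d : ℝ, d ≠ 0 → ∀ x₁ : ℝ,
      ‖∫ α in (-(1/2) : ℝ)..(1/2),
          Complex.exp (Complex.I * α * x₁) / (Complex.I * ε - d * α)‖ ≤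
        C * (1 / |d|) * (1 + Real.log (|x₁| + 1)) +
          (2 / |d|) * (1 + Real.log (|x₁| + 1)) := by
  refine ⟨8, by norm_num, fun ε hε d hd x => ?_⟩
  have hlog : Real.log (1 + 1 / 2 * |x|) ≤ Real.log (|x| + 1) :=
    Real.log_le_log (by positivity) (by linarith [abs_nonneg x])
  have hlog₀ : 0 ≤ Real.log (|x| + 1) := Real.log_nonneg (by linarith [abs_nonneg x])
  have hd' : 0 < 1 / |d| := by positivity
  calc _ ≤ π / |d| + 8 / |d| * Real.log (1 + 1 / 2 * |x|) := norm_integral_psiIntegrand_le hε hd x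
    _ ≤ _ := by
      rw [div_eq_mul_one_div π, div_eq_mul_one_div 8, div_eq_mul_one_div 2]
      nlinarith [pi_lt_four, mul_le_mul_of_nonneg_left hlog hd'.le, mul_nonneg hd'.le hlog₀]
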